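/- arXiv:2406.09605 — 4 statements merged into one kernel-verified Lean document; each statement's English description precedes it below -/
import Mathlib

section
/- Let V and M be Hilbert spaces, K ⊆ V a closed convex set containing 0, a : V × V → ℝ and b : V × M → ℝ continuous bilinear forms, G ∈ V', F ∈ M'. Assume (i) a(Ψ,Ψ) ≥ 0 for all Ψ ∈ V; (ii) a(Ψ,Ψ) ≥ α‖Ψ‖² for all Ψ in the kernel N = {Ψ ∈ V : b(Ψ,v) = 0 for all v ∈ M}, with α > 0; (iii) there is a closed subspace W ⊆ K and β > 0 with sup_{Ψ∈W} b(Ψ,v)/‖Ψ‖ ≥ β‖v‖ for all v ∈ M. Then any solution (Σ, u) ∈ K × M of the mixed variational inequality [a(Σ, Ψ−Σ) + b(Ψ−Σ, u) ≥ G(Ψ−Σ) for all Ψ ∈ K, and b(Σ, v) = F(v) for all v ∈ M] satisfies ‖Σ‖_V + ‖u‖_M ≤ C(‖F‖_{M'} + ‖G‖_{V'}) with C independent of F, G. -/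
open RealInnerProductSpace

set_option maxHeartbeats 1000000 in
/-- stability estimate: under nonnegativity of `a`, coercivity of `a`
on the kernel `N` of `b`, and an inf-sup condition for `b` over a closed subspace
`W ⊆ K`, any solution `(Σ, u) ∈ K × M` of the mixed variational inequality satisfies
`‖Σ‖ + ‖u‖ ≤ C (‖F‖ + ‖G‖)` with a constant `C` independent of `F` and `G`. -/
theorem stmt_6
    {V M : Type*} [NormedAddCommGroup V] [InnerProductSpace ℝ V] [CompleteSpace V]
    [NormedAddCommGroup M] [InnerProductSpace ℝ M] [CompleteSpace M]
    (K : Set V) (hKclosed : IsClosed K) (hKconv : Convex ℝ K) (hK0 : (0:V) ∈ K)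
    (a : V →L[ℝ] V →L[ℝ] ℝ) (b : V →L[ℝ] M →L[ℝ] ℝ)
    (hpos : ∀ Ψ : V, 0 ≤ a Ψ Ψ)
    (α : ℝ) (hα : 0 < α)
    (hcoer : ∀ Ψ : V, (∀ v : M, b Ψ v = 0) → α * ‖Ψ‖ ^ 2 ≤ a Ψ Ψ)
    (W : Submodule ℝ V) (hWclosed : IsClosed (W : Set V)) (hWK : (W : Set V) ⊆ K)
    (β : ℝ) (hβ : 0 < β)
    (hinfsup : ∀ v : M, β * ‖v‖ ≤ ⨆ Ψ : W, b Ψ v / ‖(Ψ : V)‖) :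
    ∃ C > (0:ℝ), ∀ (G : V →L[ℝ] ℝ) (F : M →L[ℝ] ℝ) (Sg : V) (u : M),
      Sg ∈ K →
      (∀ Ψ ∈ K, G (Ψ - Sg) ≤ a Sg (Ψ - Sg) + b (Ψ - Sg) u) →
      (∀ v : M, b Sg v = F v) →
      ‖Sg‖ + ‖u‖ ≤ C * (‖F‖ + ‖G‖) := by
  haveI : CompleteSpace W := hWclosed.completeSpace_coe
  have hCa0 : (0:ℝ) ≤ ‖a‖ := norm_nonneg a
  -- an operator T : M →L W with ⟪T v, w⟫ = b w v
  obtain ⟨T, hT⟩ : ∃ T : M →L[ℝ] W, ∀ (v : M) (w : W), ⟪T v, w⟫ = b (w : V) v := by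
    refine ⟨ContinuousLinearMap.adjoint
      (((InnerProductSpace.toDual ℝ M).symm.toContinuousLinearEquiv.toContinuousLinearMap.comp
        b).comp W.subtypeL), fun v w => ?_⟩
    rw [ContinuousLinearMap.adjoint_inner_left]
    simp only [ContinuousLinearMap.comp_apply, Submodule.subtypeL_apply,
      ContinuousLinearEquiv.coe_coe, LinearIsometryEquiv.coe_toContinuousLinearEquiv]
    rw [real_inner_comm]
    exact InnerProductSpace.toDual_symm_apply
  have hTlb : ∀ v : M, β * ‖v‖ ≤ ‖T v‖ := by
    intro v
    refine (hinfsup v).trans (Real.iSup_le ?_ (norm_nonneg _))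
    intro w
    rcases eq_or_ne (w : V) 0 with h | h
    · simp [h]
    · have hw : 0 < ‖(w : V)‖ := norm_pos_iff.mpr h
      rw [div_le_iff₀ hw]
      calc b (w : V) v = ⟪T v, w⟫ := (hT v w).symm
        _ ≤ ‖T v‖ * ‖w‖ := real_inner_le_norm _ _
        _ = ‖T v‖ * ‖(w : V)‖ := rfl
  -- solvability of the constraint equation in W
  have hsolv : ∀ F : M →L[ℝ] ℝ, ∃ v₀ : M, ∀ v : M, ⟪T v₀, T v⟫ = F v := by
    intro F
    have hBf : ∀ v w : M,
        ((innerSL ℝ).comp ((ContinuousLinearMap.adjoint T).comp T)) v w = ⟪T v, T w⟫ := by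
      intro v w
      simp only [ContinuousLinearMap.comp_apply, innerSL_apply_apply]
      exact ContinuousLinearMap.adjoint_inner_left T w (T v)
    have hcoerS : IsCoercive ((innerSL ℝ).comp ((ContinuousLinearMap.adjoint T).comp T)) := by
      refine ⟨β ^ 2, by positivity, fun v => ?_⟩
      rw [hBf, real_inner_self_eq_norm_sq]
      have h2 := hTlb v
      calc β ^ 2 * ‖v‖ * ‖v‖ = (β * ‖v‖) * (β * ‖v‖) := by ring
        _ ≤ ‖T v‖ * ‖T v‖ := mul_self_le_mul_self (mul_nonneg hβ.le (norm_nonneg v)) h2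
        _ = ‖T v‖ ^ 2 := (pow_two _).symm
    refine ⟨hcoerS.continuousLinearEquivOfBilin.symm ((InnerProductSpace.toDual ℝ M).symm F),
      fun v => ?_⟩
    rw [← hBf, ← hcoerS.continuousLinearEquivOfBilin_apply,
      ContinuousLinearEquiv.apply_symm_apply]
    exact InnerProductSpace.toDual_symm_apply
  -- the constant
  obtain ⟨K1, hK1⟩ : ∃ x : ℝ, x = 1 / β + 1 / α + ‖a‖ / (α * β) := ⟨_, rfl⟩
  have hK1nn : 0 ≤ K1 := by
    have h1 : 0 < 1 / β := by positivity
    have h2 : 0 < 1 / α := by positivity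
    have h3 : 0 ≤ ‖a‖ / (α * β) := by positivity
    rw [hK1]; linarith
  have haK1 : 0 ≤ ‖a‖ * K1 := mul_nonneg hCa0 hK1nn
  have hXnn : 0 ≤ (1 + ‖a‖ * K1) / β := div_nonneg (by linarith) hβ.le
  refine ⟨K1 + (1 + ‖a‖ * K1) / β + 1, by linarith, ?_⟩
  intro G F Sg u hSgK hVI hbF
  obtain ⟨R, hR⟩ : ∃ x : ℝ, x = ‖F‖ + ‖G‖ := ⟨_, rfl⟩
  have hFR : ‖F‖ ≤ R := by rw [hR]; linarith [norm_nonneg G]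
  have hGR : ‖G‖ ≤ R := by rw [hR]; linarith [norm_nonneg F]
  have hR0 : 0 ≤ R := by rw [hR]; positivity
  obtain ⟨v₀, hv₀⟩ := hsolv F
  set Sf : V := ((T v₀ : W) : V) with hSf
  have hSfK : Sf ∈ K := hWK (T v₀).2
  have hbSf : ∀ v : M, b Sf v = F v := by
    intro v
    rw [hSf, ← hT v (T v₀)]
    exact (real_inner_comm _ _).trans (hv₀ v)
  have hSfnorm_eq : ‖Sf‖ = ‖T v₀‖ := rfl
  have hSfbound : β * ‖Sf‖ ≤ ‖F‖ := by
    have h1 : ‖Sf‖ ^ 2 = F v₀ := by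
      rw [← hv₀ v₀, hSfnorm_eq]
      exact (real_inner_self_eq_norm_sq (T v₀)).symm
    have h2 : F v₀ ≤ ‖F‖ * ‖v₀‖ := by
      calc F v₀ ≤ |F v₀| := le_abs_self _
        _ ≤ ‖F‖ * ‖v₀‖ := F.le_opNorm v₀
    have h3 : β * ‖v₀‖ ≤ ‖T v₀‖ := hTlb v₀
    rcases eq_or_lt_of_le (norm_nonneg Sf) with h0 | h0
    · rw [← h0, mul_zero]; exact norm_nonneg F
    · have h4 : β * ‖Sf‖ * ‖Sf‖ ≤ ‖F‖ * ‖Sf‖ := by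
        have h5 : β * ‖v₀‖ ≤ ‖Sf‖ := by rw [hSfnorm_eq]; exact h3
        nlinarith [norm_nonneg (F : M →L[ℝ] ℝ), norm_nonneg v₀]
      exact le_of_mul_le_mul_right h4 h0
  have hSfR : ‖Sf‖ ≤ R / β := by
    rw [le_div_iff₀ hβ]
    calc ‖Sf‖ * β = β * ‖Sf‖ := mul_comm _ _
      _ ≤ ‖F‖ := hSfbound
      _ ≤ R := hFR
  -- b w u = G w - a Sg w for w ∈ W
  have keyW : ∀ w : W, b (w : V) u = G (w : V) - a Sg (w : V) := by
    intro w
    have key : ∀ t : ℝ, t * (G (w : V) - a Sg (w : V) - b (w : V) u)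
        ≤ G Sg - a Sg Sg - b Sg u := by
      intro t
      have h := hVI (t • (w : V)) (hWK (W.smul_mem t w.2))
      simp only [map_sub, map_smul, ContinuousLinearMap.sub_apply,
        ContinuousLinearMap.smul_apply, smul_eq_mul] at h
      nlinarith [h]
    have hd : G (w : V) - a Sg (w : V) - b (w : V) u = 0 := by
      by_contra hne
      have h := key ((G Sg - a Sg Sg - b Sg u + 1) / (G (w : V) - a Sg (w : V) - b (w : V) u))
      rw [div_mul_cancel₀ _ hne] at h
      linarith
    linarith
  -- bound on u
  have hu : β * ‖u‖ ≤ ‖G‖ + ‖a‖ * ‖Sg‖ := by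
    refine (hinfsup u).trans (Real.iSup_le ?_ (by positivity))
    intro w
    rcases eq_or_ne (w : V) 0 with h | h
    · rw [h]; simp; positivity
    · have hw : 0 < ‖(w : V)‖ := norm_pos_iff.mpr h
      rw [div_le_iff₀ hw, keyW w]
      have h1 : G (w : V) ≤ ‖G‖ * ‖(w : V)‖ := by
        calc G (w : V) ≤ |G (w : V)| := le_abs_self _
          _ ≤ ‖G‖ * ‖(w : V)‖ := G.le_opNorm _
      have h2 : |a Sg (w : V)| ≤ ‖a‖ * ‖Sg‖ * ‖(w : V)‖ := by
        calc |a Sg (w : V)| ≤ ‖a Sg‖ * ‖(w : V)‖ := (a Sg).le_opNorm _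
          _ ≤ ‖a‖ * ‖Sg‖ * ‖(w : V)‖ :=
            mul_le_mul_of_nonneg_right (a.le_opNorm Sg) (norm_nonneg _)
      have h3 : -(‖a‖ * ‖Sg‖ * ‖(w : V)‖) ≤ a Sg (w : V) := neg_le_of_abs_le h2
      nlinarith
  -- bound on δ = Sg - Sf
  set δ : V := Sg - Sf with hδ
  have hδb : ∀ v : M, b δ v = 0 := by
    intro v
    rw [hδ, map_sub, ContinuousLinearMap.sub_apply, hbF, hbSf, sub_self]
  have hδcoer : α * ‖δ‖ ^ 2 ≤ a δ δ := hcoer δ hδb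
  have hbdiff : b (Sf - Sg) u = 0 := by
    rw [map_sub, ContinuousLinearMap.sub_apply, hbF, hbSf, sub_self]
  have hVIF := hVI Sf hSfK
  rw [hbdiff, add_zero] at hVIF
  have step : a δ δ ≤ G δ - a Sf δ := by
    have e1 : a δ δ = a Sg Sg - a Sg Sf - (a Sf Sg - a Sf Sf) := by
      rw [hδ]; simp only [map_sub, ContinuousLinearMap.sub_apply]; ring
    have e2 : a Sf δ = a Sf Sg - a Sf Sf := by
      rw [hδ]; simp only [map_sub, ContinuousLinearMap.sub_apply]
    have e3 : G δ = G Sg - G Sf := by rw [hδ, map_sub]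
    have e4 : G (Sf - Sg) = G Sf - G Sg := by rw [map_sub]
    have e5 : a Sg (Sf - Sg) = a Sg Sf - a Sg Sg := by rw [map_sub]
    rw [e4, e5] at hVIF
    linarith
  have hδbound : α * ‖δ‖ ≤ ‖G‖ + ‖a‖ * ‖Sf‖ := by
    have h1 : G δ ≤ ‖G‖ * ‖δ‖ := by
      calc G δ ≤ |G δ| := le_abs_self _
        _ ≤ ‖G‖ * ‖δ‖ := G.le_opNorm _
    have h2 : |a Sf δ| ≤ ‖a‖ * ‖Sf‖ * ‖δ‖ := by
      calc |a Sf δ| ≤ ‖a Sf‖ * ‖δ‖ := (a Sf).le_opNorm _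
        _ ≤ ‖a‖ * ‖Sf‖ * ‖δ‖ := mul_le_mul_of_nonneg_right (a.le_opNorm Sf) (norm_nonneg _)
    have h3 : -(‖a‖ * ‖Sf‖ * ‖δ‖) ≤ a Sf δ := neg_le_of_abs_le h2
    rcases eq_or_lt_of_le (norm_nonneg δ) with h0 | h0
    · rw [← h0, mul_zero]; positivity
    · have h4 : α * ‖δ‖ * ‖δ‖ ≤ (‖G‖ + ‖a‖ * ‖Sf‖) * ‖δ‖ := by nlinarith
      exact le_of_mul_le_mul_right h4 h0
  -- combine
  have hSgbound : ‖Sg‖ ≤ K1 * R := by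
    have h1 : ‖Sg‖ ≤ ‖δ‖ + ‖Sf‖ := by
      calc ‖Sg‖ = ‖δ + Sf‖ := by rw [hδ, sub_add_cancel]
        _ ≤ ‖δ‖ + ‖Sf‖ := norm_add_le _ _
    have h2 : ‖δ‖ ≤ (R + ‖a‖ * (R / β)) / α := by
      rw [le_div_iff₀ hα]
      have h5 : ‖a‖ * ‖Sf‖ ≤ ‖a‖ * (R / β) := mul_le_mul_of_nonneg_left hSfR hCa0
      calc ‖δ‖ * α = α * ‖δ‖ := mul_comm _ _
        _ ≤ ‖G‖ + ‖a‖ * ‖Sf‖ := hδbound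
        _ ≤ R + ‖a‖ * (R / β) := by linarith
    have h3 : (R + ‖a‖ * (R / β)) / α + R / β = K1 * R := by
      rw [hK1]; field_simp; ring
    linarith
  have hubound : ‖u‖ ≤ (1 + ‖a‖ * K1) / β * R := by
    rw [div_mul_eq_mul_div, le_div_iff₀ hβ]
    have h1 : ‖a‖ * ‖Sg‖ ≤ ‖a‖ * (K1 * R) := mul_le_mul_of_nonneg_left hSgbound hCa0
    calc ‖u‖ * β = β * ‖u‖ := mul_comm _ _
      _ ≤ ‖G‖ + ‖a‖ * ‖Sg‖ := hu
      _ ≤ R + ‖a‖ * (K1 * R) := by linarith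
      _ = (1 + ‖a‖ * K1) * R := by ring
  calc ‖Sg‖ + ‖u‖ ≤ K1 * R + (1 + ‖a‖ * K1) / β * R := by linarith
    _ ≤ (K1 + (1 + ‖a‖ * K1) / β + 1) * R := by nlinarith [hR0]
    _ = (K1 + (1 + ‖a‖ * K1) / β + 1) * (‖F‖ + ‖G‖) := by rw [hR]
end

section
/- Under the assumptions: V, M Hilbert spaces, K ⊆ V closed convex with 0 ∈ K, a nonnegative continuous bilinear form on V that is coercive on the kernel N of b, and b satisfying an inf-sup condition over a closed subspace W ⊆ K, the mixed variational inequality [find (Σ,u) ∈ K × M with a(Σ, Ψ−Σ) + b(Ψ−Σ, u) ≥ G(Ψ−Σ) for all Ψ ∈ K and b(Σ, v) = F(v) for all v ∈ M] has at most one solution. -/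
/-! Testing the variational inequalities of two solutions against each other shows that
`a(Σ₁ - Σ₂, Σ₁ - Σ₂) ≤ 0`; since `Σ₁ - Σ₂` lies in the kernel of `b`, coercivity forces
`Σ₁ = Σ₂ =: Σ`. A closed convex set is invariant under translation by any subspace it contains,
so `Σ ± ψ ∈ K` for `ψ ∈ W`, and testing there turns the inequalities into the equations
`b(ψ, uᵢ) = G ψ - a(Σ, ψ)`. Hence `b(·, u₁ - u₂)` vanishes on `W`, and inf-sup gives `u₁ = u₂`. -/

open Filter Topology

theorem Convex.add_mem_of_isClosed_of_submodule_subset {E : Type*} [AddCommGroup E]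
    [Module ℝ E] [TopologicalSpace E] [IsTopologicalAddGroup E] [ContinuousSMul ℝ E]
    {K : Set E} (hKconv : Convex ℝ K) (hKclosed : IsClosed K) {W : Submodule ℝ E}
    (hWK : (W : Set E) ⊆ K) {x w : E} (hx : x ∈ K) (hw : w ∈ W) : x + w ∈ K := by
  -- `t • x + w = t • x + (1 - t) • ((1 - t)⁻¹ • w)` is a convex combination for `t < 1`.
  have hcombo : ∀ t ∈ Set.Ioo (0 : ℝ) 1, t • x + w ∈ K := by
    intro t ⟨ht0, ht1⟩
    have hne : 1 - t ≠ 0 := sub_ne_zero.mpr ht1.ne'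
    have hw' : (1 - t)⁻¹ • w ∈ K := hWK (W.smul_mem _ hw)
    simpa only [smul_inv_smul₀ hne] using
      hKconv hx hw' ht0.le (sub_nonneg.mpr ht1.le) (add_sub_cancel t 1)
  have hlim : Tendsto (fun t : ℝ => t • x + w) (𝓝[<] 1) (𝓝 (x + w)) := by
    have hcont : Continuous (fun t : ℝ => t • x + w) := by fun_prop
    simpa only [one_smul] using (hcont.tendsto 1).mono_left nhdsWithin_le_nhds
  exact hKclosed.mem_of_tendsto hlim
    (Filter.mem_of_superset (Ioo_mem_nhdsLT zero_lt_one) hcombo)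

theorem eq_zero_of_infSup {V M : Type*} [NormedAddCommGroup V] [NormedSpace ℝ V]
    [NormedAddCommGroup M] [NormedSpace ℝ M] {b : V →L[ℝ] M →L[ℝ] ℝ} {W : Submodule ℝ V}
    {β : ℝ} (hβ : 0 < β) {v : M} (hinfsup : β * ‖v‖ ≤ ⨆ ψ : W, b ψ v / ‖(ψ : V)‖)
    (hv : ∀ ψ ∈ W, b ψ v = 0) : v = 0 := by
  have hsup : (⨆ ψ : W, b ψ v / ‖(ψ : V)‖) = 0 := by
    simp only [fun ψ : W => hv ψ ψ.2, zero_div, ciSup_const]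
  rw [hsup] at hinfsup
  exact norm_le_zero_iff.mp (nonpos_of_mul_nonpos_right hinfsup hβ)

section MixedVariationalInequality

variable {V M : Type*} [NormedAddCommGroup V] [NormedSpace ℝ V]
  [NormedAddCommGroup M] [NormedSpace ℝ M]
  (K : Set V) (a : V →L[ℝ] V →L[ℝ] ℝ) (b : V →L[ℝ] M →L[ℝ] ℝ) (G : V →L[ℝ] ℝ) (F : M →L[ℝ] ℝ)

structure IsMixedVISolution (S : V) (u : M) : Prop where
  mem : S ∈ K
  le_apply : ∀ Ψ ∈ K, G (Ψ - S) ≤ a S (Ψ - S) + b (Ψ - S) u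
  apply_eq : ∀ v : M, b S v = F v

variable {K a b G F}

namespace IsMixedVISolution

theorem sub_mem_ker {S₁ S₂ : V} {u₁ u₂ : M} (h₁ : IsMixedVISolution K a b G F S₁ u₁)
    (h₂ : IsMixedVISolution K a b G F S₂ u₂) (v : M) : b (S₁ - S₂) v = 0 := by
  rw [map_sub, sub_apply, h₁.apply_eq, h₂.apply_eq, sub_self]

theorem apply_sub_sub_nonpos {S₁ S₂ : V} {u₁ u₂ : M} (h₁ : IsMixedVISolution K a b G F S₁ u₁)
    (h₂ : IsMixedVISolution K a b G F S₂ u₂) : a (S₁ - S₂) (S₁ - S₂) ≤ 0 := by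
  have hker := h₁.sub_mem_ker h₂
  have hker' : ∀ v, b (S₂ - S₁) v = 0 := fun v => by
    rw [← neg_sub, map_neg, neg_apply, hker, neg_zero]
  have e₁ := h₁.le_apply S₂ h₂.mem
  have e₂ := h₂.le_apply S₁ h₁.mem
  rw [hker'] at e₁
  rw [hker] at e₂
  simp only [map_sub, sub_apply] at e₁ e₂ ⊢
  linarith

theorem fst_eq {S₁ S₂ : V} {u₁ u₂ : M} (h₁ : IsMixedVISolution K a b G F S₁ u₁)
    (h₂ : IsMixedVISolution K a b G F S₂ u₂) {α : ℝ} (hα : 0 < α)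
    (hcoer : ∀ Ψ : V, (∀ v : M, b Ψ v = 0) → α * ‖Ψ‖ ^ 2 ≤ a Ψ Ψ) : S₁ = S₂ := by
  have h := (hcoer _ (h₁.sub_mem_ker h₂)).trans (h₁.apply_sub_sub_nonpos h₂)
  have hsq : ‖S₁ - S₂‖ ^ 2 ≤ 0 := nonpos_of_mul_nonpos_right h hα
  exact sub_eq_zero.mp (norm_eq_zero.mp (pow_eq_zero_iff two_ne_zero |>.mp
    (le_antisymm hsq (sq_nonneg _))))

theorem apply_eq_of_add_mem {S : V} {u : M} (h : IsMixedVISolution K a b G F S u) {ψ : V}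
    (hplus : S + ψ ∈ K) (hminus : S + -ψ ∈ K) : b ψ u = G ψ - a S ψ := by
  have e₁ := h.le_apply _ hplus
  have e₂ := h.le_apply _ hminus
  simp only [add_sub_cancel_left, map_neg, neg_apply] at e₁ e₂
  linarith

theorem snd_eq {S : V} {u₁ u₂ : M} (h₁ : IsMixedVISolution K a b G F S u₁)
    (h₂ : IsMixedVISolution K a b G F S u₂) (hKclosed : IsClosed K) (hKconv : Convex ℝ K)
    {W : Submodule ℝ V} (hWK : (W : Set V) ⊆ K) {β : ℝ} (hβ : 0 < β)
    (hinfsup : ∀ v : M, β * ‖v‖ ≤ ⨆ Ψ : W, b Ψ v / ‖(Ψ : V)‖) : u₁ = u₂ := by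
  have hW : ∀ ψ ∈ W, b ψ (u₁ - u₂) = 0 := by
    intro ψ hψ
    have hplus := hKconv.add_mem_of_isClosed_of_submodule_subset hKclosed hWK h₁.mem hψ
    have hminus := hKconv.add_mem_of_isClosed_of_submodule_subset hKclosed hWK h₁.mem
      (W.neg_mem hψ)
    rw [map_sub, h₁.apply_eq_of_add_mem hplus hminus, h₂.apply_eq_of_add_mem hplus hminus,
      sub_self]
  exact sub_eq_zero.mp (eq_zero_of_infSup hβ (hinfsup _) hW)

end IsMixedVISolution

end MixedVariationalInequality

theorem stmt_7_general
    {V M : Type*} [NormedAddCommGroup V] [InnerProductSpace ℝ V]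
    [NormedAddCommGroup M] [InnerProductSpace ℝ M]
    (K : Set V) (hKclosed : IsClosed K) (hKconv : Convex ℝ K)
    (a : V →L[ℝ] V →L[ℝ] ℝ) (b : V →L[ℝ] M →L[ℝ] ℝ)
    (α : ℝ) (hα : 0 < α)
    (hcoer : ∀ Ψ : V, (∀ v : M, b Ψ v = 0) → α * ‖Ψ‖ ^ 2 ≤ a Ψ Ψ)
    (W : Submodule ℝ V) (hWK : (W : Set V) ⊆ K)
    (β : ℝ) (hβ : 0 < β)
    (hinfsup : ∀ v : M, β * ‖v‖ ≤ ⨆ Ψ : W, b Ψ v / ‖(Ψ : V)‖)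
    (G : V →L[ℝ] ℝ) (F : M →L[ℝ] ℝ)
    (Sg₁ Sg₂ : V) (u₁ u₂ : M)
    (hS₁ : Sg₁ ∈ K)
    (hVI₁ : ∀ Ψ ∈ K, G (Ψ - Sg₁) ≤ a Sg₁ (Ψ - Sg₁) + b (Ψ - Sg₁) u₁)
    (heq₁ : ∀ v : M, b Sg₁ v = F v)
    (hS₂ : Sg₂ ∈ K)
    (hVI₂ : ∀ Ψ ∈ K, G (Ψ - Sg₂) ≤ a Sg₂ (Ψ - Sg₂) + b (Ψ - Sg₂) u₂)
    (heq₂ : ∀ v : M, b Sg₂ v = F v) :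
    Sg₁ = Sg₂ ∧ u₁ = u₂ := by
  have h₁ : IsMixedVISolution K a b G F Sg₁ u₁ := ⟨hS₁, hVI₁, heq₁⟩
  have h₂ : IsMixedVISolution K a b G F Sg₂ u₂ := ⟨hS₂, hVI₂, heq₂⟩
  obtain rfl := h₁.fst_eq h₂ hα hcoer
  exact ⟨rfl, h₁.snd_eq h₂ hKclosed hKconv hWK hβ hinfsup⟩

/-- uniqueness: under the assumptions of the mixed framework
(nonnegativity of `a`, coercivity of `a` on the kernel of `b`, inf-sup for `b`
over a closed subspace `W ⊆ K`), the mixed variational inequality has at most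
one solution. -/
theorem stmt_7
    {V M : Type*} [NormedAddCommGroup V] [InnerProductSpace ℝ V] [CompleteSpace V]
    [NormedAddCommGroup M] [InnerProductSpace ℝ M] [CompleteSpace M]
    (K : Set V) (hKclosed : IsClosed K) (hKconv : Convex ℝ K) (hK0 : (0:V) ∈ K)
    (a : V →L[ℝ] V →L[ℝ] ℝ) (b : V →L[ℝ] M →L[ℝ] ℝ)
    (hpos : ∀ Ψ : V, 0 ≤ a Ψ Ψ)
    (α : ℝ) (hα : 0 < α)
    (hcoer : ∀ Ψ : V, (∀ v : M, b Ψ v = 0) → α * ‖Ψ‖ ^ 2 ≤ a Ψ Ψ)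
    (W : Submodule ℝ V) (hWclosed : IsClosed (W : Set V)) (hWK : (W : Set V) ⊆ K)
    (β : ℝ) (hβ : 0 < β)
    (hinfsup : ∀ v : M, β * ‖v‖ ≤ ⨆ Ψ : W, b Ψ v / ‖(Ψ : V)‖)
    (G : V →L[ℝ] ℝ) (F : M →L[ℝ] ℝ)
    (Sg₁ Sg₂ : V) (u₁ u₂ : M)
    (hS₁ : Sg₁ ∈ K)
    (hVI₁ : ∀ Ψ ∈ K, G (Ψ - Sg₁) ≤ a Sg₁ (Ψ - Sg₁) + b (Ψ - Sg₁) u₁)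
    (heq₁ : ∀ v : M, b Sg₁ v = F v)
    (hS₂ : Sg₂ ∈ K)
    (hVI₂ : ∀ Ψ ∈ K, G (Ψ - Sg₂) ≤ a Sg₂ (Ψ - Sg₂) + b (Ψ - Sg₂) u₂)
    (heq₂ : ∀ v : M, b Sg₂ v = F v) :
    Sg₁ = Sg₂ ∧ u₁ = u₂ :=
  stmt_7_general K hKclosed hKconv a b α hα hcoer W hWK β hβ hinfsup G F Sg₁ Sg₂ u₁ u₂ hS₁ hVI₁ heq₁
    hS₂ hVI₂ heq₂
end

section
/- For all (v, τ, μ) ∈ H₀¹(Ω) × [L²(Ω)]ⁿ × H⁻¹(Ω), the squared norm ‖v‖²_{H₀¹} + ‖τ‖²_{L²} + ‖μ‖²_{H⁻¹} is equivalent (with constants independent of (v,τ,μ)) to ‖div τ + μ‖²_{H⁻¹} + ‖τ − ∇v‖²_{L²} + ⟨μ, v⟩, where ⟨·,·⟩ is the duality pairing between H⁻¹(Ω) and H₀¹(Ω). -/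
/-!
Write `F(v, τ, μ) = ‖div τ + μ‖² + ‖τ - ∇v‖² + ⟨μ, v⟩`. Since `⟨div τ, v⟩ = -⟨τ, ∇v⟩` and, by
polarization, `2⟨τ, ∇v⟩ = ‖τ‖² + ‖v‖² - ‖τ - ∇v‖²`, the pairing term can be rewritten as
`⟨μ, v⟩ = ⟨div τ + μ, v⟩ + (‖τ‖² + ‖v‖² - ‖τ - ∇v‖²) / 2`. This makes `‖τ‖²` and `‖v‖²` appear
with positive weight, while `|⟨div τ + μ, v⟩| ≤ ‖div τ + μ‖ ‖v‖` is absorbed by `‖div τ + μ‖²` and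
`‖v‖² / 2`; finally `‖μ‖ ≤ ‖div τ + μ‖ + ‖τ‖` controls `μ`. The upper bound is the triangle
inequality together with `‖div τ‖ ≤ ‖τ‖`.
-/

open RealInnerProductSpace

/-- The distributional divergence `div τ ∈ H⁻¹` of `τ ∈ L²`, defined through the
(isometric) gradient `∇ : H₀¹ → L²` by `⟨div τ, v⟩ = -⟨τ, ∇v⟩`. -/
noncomputable def divOp {H E : Type*} [NormedAddCommGroup H] [InnerProductSpace ℝ H]
    [NormedAddCommGroup E] [InnerProductSpace ℝ E]
    (grad : H →ₗᵢ[ℝ] E) (τ : E) : H →L[ℝ] ℝ :=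
  -(((innerSL ℝ) τ).comp grad.toContinuousLinearMap)

section

variable {H E : Type*} [NormedAddCommGroup H] [InnerProductSpace ℝ H]
  [NormedAddCommGroup E] [InnerProductSpace ℝ E] (grad : H →ₗᵢ[ℝ] E)

noncomputable def lsqFunctional (v : H) (τ : E) (μ : H →L[ℝ] ℝ) : ℝ :=
  ‖divOp grad τ + μ‖ ^ 2 + ‖τ - grad v‖ ^ 2 + μ v

theorem divOp_apply (τ : E) (v : H) : divOp grad τ v = -⟪τ, grad v⟫ := rfl

theorem norm_divOp_le (τ : E) : ‖divOp grad τ‖ ≤ ‖τ‖ := by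
  refine ContinuousLinearMap.opNorm_le_bound _ (norm_nonneg τ) fun v => ?_
  rw [divOp_apply, norm_neg, Real.norm_eq_abs, ← grad.norm_map]
  exact abs_real_inner_le_norm τ (grad v)

theorem lsqFunctional_eq (v : H) (τ : E) (μ : H →L[ℝ] ℝ) :
    lsqFunctional grad v τ μ = ‖divOp grad τ + μ‖ ^ 2 + ‖τ - grad v‖ ^ 2 / 2
      + (divOp grad τ + μ) v + (‖τ‖ ^ 2 + ‖v‖ ^ 2) / 2 := by
  have polarization := real_inner_eq_norm_mul_self_add_norm_mul_self_sub_norm_sub_mul_self_div_two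
    τ (grad v)
  rw [grad.norm_map] at polarization
  rw [lsqFunctional, add_apply, divOp_apply, polarization]
  ring

theorem lsqFunctional_le (v : H) (τ : E) (μ : H →L[ℝ] ℝ) :
    lsqFunctional grad v τ μ ≤ 4 * (‖v‖ ^ 2 + ‖τ‖ ^ 2 + ‖μ‖ ^ 2) := by
  have hP : ‖divOp grad τ + μ‖ ≤ ‖τ‖ + ‖μ‖ :=
    (norm_add_le _ _).trans (add_le_add_left (norm_divOp_le grad τ) _)
  have hQ : ‖τ - grad v‖ ≤ ‖τ‖ + ‖v‖ :=
    (norm_sub_le _ _).trans_eq (by rw [grad.norm_map])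
  have hμ : μ v ≤ ‖μ‖ * ‖v‖ := (le_abs_self _).trans (μ.le_opNorm v)
  rw [lsqFunctional]
  nlinarith [norm_nonneg (divOp grad τ + μ), norm_nonneg (τ - grad v), norm_nonneg v,
    norm_nonneg τ, norm_nonneg μ, sq_nonneg (‖τ‖ - ‖μ‖), sq_nonneg (‖τ‖ - ‖v‖),
    sq_nonneg (‖μ‖ - ‖v‖)]

theorem le_lsqFunctional (v : H) (τ : E) (μ : H →L[ℝ] ℝ) :
    1 / 8 * (‖v‖ ^ 2 + ‖τ‖ ^ 2 + ‖μ‖ ^ 2) ≤ lsqFunctional grad v τ μ := by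
  set P := ‖divOp grad τ + μ‖
  have hμ : ‖μ‖ ≤ P + ‖τ‖ :=
    calc ‖μ‖ = ‖(divOp grad τ + μ) - divOp grad τ‖ := by rw [add_sub_cancel_left]
      _ ≤ P + ‖divOp grad τ‖ := norm_sub_le _ _
      _ ≤ P + ‖τ‖ := add_le_add_right (norm_divOp_le grad τ) _
  have hpair : -(P * ‖v‖) ≤ (divOp grad τ + μ) v :=
    neg_le_of_abs_le ((divOp grad τ + μ).le_opNorm v)
  rw [lsqFunctional_eq]
  nlinarith [norm_nonneg (divOp grad τ + μ), norm_nonneg v, norm_nonneg τ, norm_nonneg μ,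
    sq_nonneg ‖τ - grad v‖, sq_nonneg (3 * P - 2 * ‖v‖), sq_nonneg (P - ‖τ‖)]

end

theorem stmt_9_general {H E : Type*} [NormedAddCommGroup H] [InnerProductSpace ℝ H]
    [NormedAddCommGroup E] [InnerProductSpace ℝ E]
    (grad : H →ₗᵢ[ℝ] E) :
    ∃ c > (0:ℝ), ∃ C > (0:ℝ), ∀ (v : H) (τ : E) (μ : H →L[ℝ] ℝ),
      c * (‖v‖ ^ 2 + ‖τ‖ ^ 2 + ‖μ‖ ^ 2) ≤
          ‖divOp grad τ + μ‖ ^ 2 + ‖τ - grad v‖ ^ 2 + μ v ∧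
      ‖divOp grad τ + μ‖ ^ 2 + ‖τ - grad v‖ ^ 2 + μ v ≤
          C * (‖v‖ ^ 2 + ‖τ‖ ^ 2 + ‖μ‖ ^ 2) :=
  ⟨1 / 8, by norm_num, 4, by norm_num, fun v τ μ =>
    ⟨le_lsqFunctional grad v τ μ, lsqFunctional_le grad v τ μ⟩⟩

/-- norm equivalence: for all `(v, τ, μ) ∈ H₀¹ × L² × H⁻¹`,
`‖v‖² + ‖τ‖² + ‖μ‖²` is equivalent to `‖div τ + μ‖² + ‖τ - ∇v‖² + ⟨μ, v⟩`,
with constants independent of `(v, τ, μ)`. Here `H₀¹` carries the norm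
`‖v‖ = ‖∇v‖`, modeled by a linear isometry `grad`, and `H⁻¹` is the dual. -/
theorem stmt_9 {H E : Type*} [NormedAddCommGroup H] [InnerProductSpace ℝ H]
    [CompleteSpace H] [NormedAddCommGroup E] [InnerProductSpace ℝ E] [CompleteSpace E]
    (grad : H →ₗᵢ[ℝ] E) :
    ∃ c > (0:ℝ), ∃ C > (0:ℝ), ∀ (v : H) (τ : E) (μ : H →L[ℝ] ℝ),
      c * (‖v‖ ^ 2 + ‖τ‖ ^ 2 + ‖μ‖ ^ 2) ≤
          ‖divOp grad τ + μ‖ ^ 2 + ‖τ - grad v‖ ^ 2 + μ v ∧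
      ‖divOp grad τ + μ‖ ^ 2 + ‖τ - grad v‖ ^ 2 + μ v ≤
          C * (‖v‖ ^ 2 + ‖τ‖ ^ 2 + ‖μ‖ ^ 2) :=
  stmt_9_general grad
end

section
/- Let V_h, M_h be the discrete spaces and (σ_h, λ_h, u_h) the solution of the discrete mixed obstacle problem. Then the discrete complementarity and feasibility properties hold: (i) div σ_h + λ_h = −Π_h⁰ f, (iii) ⟨λ_h, u_h − g⟩_Ω = 0, and (iv) u_h − Π_h⁰ g ≥ 0 a.e.; moreover λ_h(x)·(u_h(x) − Π_h⁰g(x)) = 0 for a.e. x ∈ Ω. -/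
/-!
Testing the equation with the indicator of a single element gives (i), since the weights are
positive. With `τ = σ_h` the inequality says that `λ_h` solves the variational inequality of the
cone of nonnegative piecewise constants with residual `u_h - Π⁰g`. Testing it with `ν = 2λ_h` and
`ν = 0` gives `⟨λ_h, u_h - Π⁰g⟩ = 0`, testing with `λ_h` plus the indicator of an element gives
`u_h - Π⁰g ≥ 0` there, and a vanishing sum of nonnegative terms vanishes termwise.
-/

open RealInnerProductSpace Finset

section WeightedSums

variable {ι : Type*} [Fintype ι]

theorem eq_of_forall_sum_weight_mul_mul_eq {w a b : ι → ℝ} (hw : ∀ i, w i ≠ 0)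
    (h : ∀ v : ι → ℝ, ∑ i, w i * (a i * v i) = ∑ i, w i * (b i * v i)) : a = b := by
  classical
  funext i
  simpa [Pi.single_apply, hw i] using h (Pi.single i 1)

section ConeVariationalInequality

variable {w lam d : ι → ℝ}

theorem sum_weight_mul_mul_eq_zero_of_cone_vi (hlam : ∀ i, 0 ≤ lam i)
    (hvi : ∀ ν : ι → ℝ, (∀ i, 0 ≤ ν i) → 0 ≤ ∑ i, w i * ((ν i - lam i) * d i)) :
    ∑ i, w i * (lam i * d i) = 0 := by
  have hup := hvi (2 • lam) fun i => by simpa using hlam i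
  have hdown := hvi 0 fun _ => le_rfl
  simp only [Pi.smul_apply, two_smul, add_sub_cancel_right, Pi.zero_apply, zero_sub,
    neg_mul, mul_neg, sum_neg_distrib, neg_nonneg] at hup hdown
  exact le_antisymm hdown hup

theorem nonneg_of_cone_vi (hw : ∀ i, 0 < w i) (hlam : ∀ i, 0 ≤ lam i)
    (hvi : ∀ ν : ι → ℝ, (∀ i, 0 ≤ ν i) → 0 ≤ ∑ i, w i * ((ν i - lam i) * d i)) (i : ι) :
    0 ≤ d i := by
  classical
  have h := hvi (lam + Pi.single i 1) fun j =>
    add_nonneg (hlam j) ((Pi.single_nonneg.2 zero_le_one : (0 : ι → ℝ) ≤ Pi.single i 1) j)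
  simp only [Pi.add_apply, Pi.single_apply, add_sub_cancel_left, ite_mul, one_mul, zero_mul,
    mul_ite, mul_zero, sum_ite_eq', mem_univ, if_true] at h
  exact nonneg_of_mul_nonneg_right h (hw i)

end ConeVariationalInequality

theorem mul_eq_zero_of_sum_weight_mul_mul_eq_zero {w a b : ι → ℝ} (hw : ∀ i, 0 < w i)
    (ha : ∀ i, 0 ≤ a i) (hb : ∀ i, 0 ≤ b i) (h : ∑ i, w i * (a i * b i) = 0) (i : ι) :
    a i * b i = 0 := by
  have hterm := (sum_eq_zero_iff_of_nonneg fun j _ =>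
    mul_nonneg (hw j).le (mul_nonneg (ha j) (hb j))).1 h i (mem_univ i)
  exact (mul_eq_zero.1 hterm).resolve_left (hw i).ne'

end WeightedSums

/-- Elements of the mesh are indexed by `ι`, element `i` having measure `w i`; `ι → ℝ` models
`P⁰(T)` with the inner product `∑ i, w i * (x i * y i)`, `Vh` models `RT⁰(T)` and `dv` the
divergence, and `gbar`, `fbar` are the elementwise averages `Π⁰g`, `Π⁰f`. -/
theorem stmt_17 {ι : Type*} [Fintype ι]
    {Vh : Type*} [NormedAddCommGroup Vh] [InnerProductSpace ℝ Vh]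
    (w : ι → ℝ) (hw : ∀ i, 0 < w i)
    (dv : Vh →ₗ[ℝ] (ι → ℝ))
    (gbar fbar : ι → ℝ)
    (σh : Vh) (lamh uh : ι → ℝ)
    (hlamh : ∀ i, 0 ≤ lamh i)
    (hVI : ∀ (τ : Vh) (ν : ι → ℝ), (∀ i, 0 ≤ ν i) →
      ∑ i, w i * ((ν i - lamh i) * gbar i) ≤
        ⟪σh, τ - σh⟫ +
          ∑ i, w i * (((dv τ i - dv σh i) + (ν i - lamh i)) * uh i))
    (heq : ∀ vh : ι → ℝ,
      ∑ i, w i * ((dv σh i + lamh i) * vh i) = - ∑ i, w i * (fbar i * vh i)) :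
    (∀ i, dv σh i + lamh i = - fbar i) ∧
    (∑ i, w i * (lamh i * (uh i - gbar i)) = 0) ∧
    (∀ i, 0 ≤ uh i - gbar i) ∧
    (∀ i, lamh i * (uh i - gbar i) = 0) := by
  have hdiv : ∀ i, dv σh i + lamh i = - fbar i := congrFun <|
    eq_of_forall_sum_weight_mul_mul_eq (fun i => (hw i).ne') fun v => by
      simp only [heq, neg_mul, mul_neg, sum_neg_distrib]
  have hvi : ∀ ν : ι → ℝ, (∀ i, 0 ≤ ν i) →
      0 ≤ ∑ i, w i * ((ν i - lamh i) * (uh i - gbar i)) := fun ν hν => by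
    have h := hVI σh ν hν
    simp only [sub_self, inner_zero_right, zero_add] at h
    simpa only [mul_sub, sum_sub_distrib, sub_nonneg] using h
  have hfeas := nonneg_of_cone_vi hw hlamh hvi
  have hcompl := sum_weight_mul_mul_eq_zero_of_cone_vi hlamh hvi
  exact ⟨hdiv, hcompl, hfeas, mul_eq_zero_of_sum_weight_mul_mul_eq_zero hw hlamh hfeas hcompl⟩
end
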